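/- arXiv:0809.5091 — 2 statements merged into one kernel-verified Lean document; each statement's English description precedes it below -/
import Mathlib

section
/- Let a, b : ℝ → ℝ be continuously differentiable functions with (sup_{y∈ℝ} |a'(y)|) · (sup_{x∈ℝ} |b'(x)|) ≤ 1/2, and define Φ : ℝ² → ℝ² by Φ(x,y) = (x + a(y), y + b(x)). Then Φ is injective, the Jacobian determinant satisfies |det DΦ(x,y)| = |1 − a'(y) b'(x)| ≥ 1/2 at every point, and for every measurable ψ : ℝ² → [0,∞], ∫_{ℝ²} ψ(Φ(x,y)) dx dy ≤ 2 ∫_{ℝ²} ψ(u,v) du dv; in particular, for every ψ ∈ L²(ℝ²), ∫_{ℝ²} |ψ(Φ(x,y))|² dx dy ≤ 2 ‖ψ‖²_{L²(ℝ²)}. (Change-of-variables estimate used in the proof of Lemma 3.2.) -/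
/-! The map `Φ(x, y) = (x + a y, y + b x)` is injective because `a` and `b` are Lipschitz with
constants whose product is `< 1`: from `Φ p = Φ q` one gets `|x - x'| ≤ Ka Kb |x - x'|`.
Its Jacobian determinant is `1 - a'(y) b'(x)`, of absolute value at least `1 - Ka Kb ≥ 1/2`, so
the change-of-variables formula for injective differentiable maps gives
`(1/2) ∫ ψ ∘ Φ ≤ ∫_{Φ(ℝ²)} ψ ≤ ∫ ψ`. -/

open MeasureTheory
open scoped ENNReal NNReal

noncomputable section

def doubleShear {E F : Type*} [Add E] [Add F] (a : F → E) (b : E → F) (p : E × F) : E × F :=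
  (p.1 + a p.2, p.2 + b p.1)

theorem lipschitzWith_of_abs_deriv_le {f : ℝ → ℝ} {K : ℝ} (hf : Differentiable ℝ f)
    (h : ∀ x, |deriv f x| ≤ K) : LipschitzWith K.toNNReal f :=
  lipschitzWith_of_nnnorm_deriv_le hf fun x => by
    rw [← NNReal.coe_le_coe, coe_nnnorm, Real.coe_toNNReal']
    exact (h x).trans (le_max_left _ _)

theorem doubleShear_injective {E F : Type*} [NormedAddCommGroup E] [NormedAddCommGroup F]
    {a : F → E} {b : E → F} {Ka Kb : ℝ≥0} (ha : LipschitzWith Ka a) (hb : LipschitzWith Kb b)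
    (hK : Ka * Kb < 1) : Function.Injective (doubleShear a b) := by
  rintro ⟨x, y⟩ ⟨x', y'⟩ h
  simp only [doubleShear, Prod.mk.injEq] at h
  obtain ⟨hx, hy⟩ := h
  have hdx : dist x x' ≤ Ka * dist y y' := by
    rw [dist_eq_norm, sub_eq_sub_iff_add_eq_add.mpr (hx.trans (add_comm _ _)), ← dist_eq_norm,
      dist_comm y]
    exact ha.dist_le_mul _ _
  have hdy : dist y y' ≤ Kb * dist x x' := by
    rw [dist_eq_norm, sub_eq_sub_iff_add_eq_add.mpr (hy.trans (add_comm _ _)), ← dist_eq_norm,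
      dist_comm x]
    exact hb.dist_le_mul _ _
  have hx' : dist x x' = 0 := by
    have hcontract : dist x x' ≤ (Ka * Kb : ℝ≥0) * dist x x' := by
      push_cast
      calc dist x x' ≤ Ka * dist y y' := hdx
        _ ≤ Ka * (Kb * dist x x') := by gcongr
        _ = _ := by ring
    have hK' : ((Ka * Kb : ℝ≥0) : ℝ) < 1 := by exact_mod_cast hK
    nlinarith [dist_nonneg (x := x) (y := x')]
  obtain rfl : x = x' := dist_eq_zero.mp hx'
  obtain rfl : y = y' := add_right_cancel hy
  rfl

theorem hasFDerivAt_doubleShear {𝕜 E F : Type*} [NontriviallyNormedField 𝕜]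
    [NormedAddCommGroup E] [NormedSpace 𝕜 E] [NormedAddCommGroup F] [NormedSpace 𝕜 F]
    {a : F → E} {b : E → F} {a' : F →L[𝕜] E} {b' : E →L[𝕜] F} {p : E × F}
    (ha : HasFDerivAt a a' p.2) (hb : HasFDerivAt b b' p.1) :
    HasFDerivAt (doubleShear a b)
      ((ContinuousLinearMap.fst 𝕜 E F + a'.comp (ContinuousLinearMap.snd 𝕜 E F)).prod
        (ContinuousLinearMap.snd 𝕜 E F + b'.comp (ContinuousLinearMap.fst 𝕜 E F))) p :=
  (hasFDerivAt_fst.add (ha.comp p hasFDerivAt_snd)).prodMk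
    (hasFDerivAt_snd.add (hb.comp p hasFDerivAt_fst))

theorem LinearMap.det_fst_add_comp_snd_prod {R : Type*} [CommRing R] (f g : R →ₗ[R] R) :
    LinearMap.det ((LinearMap.fst R R R + f ∘ₗ LinearMap.snd R R R).prod
      (LinearMap.snd R R R + g ∘ₗ LinearMap.fst R R R)) = 1 - f 1 * g 1 := by
  rw [← LinearMap.det_toMatrix (Module.Basis.finTwoProd R), Matrix.det_fin_two]
  simp [LinearMap.toMatrix_apply, Module.Basis.finTwoProd]

theorem one_sub_mul_le_abs_one_sub_mul {α : Type*} [CommRing α] [LinearOrder α]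
    [IsStrictOrderedRing α] {c d Kc Kd : α} (hc : |c| ≤ Kc) (hd : |d| ≤ Kd) :
    1 - Kc * Kd ≤ |1 - c * d| := by
  have hcd : |c * d| ≤ Kc * Kd := by
    rw [abs_mul]
    exact mul_le_mul hc hd (abs_nonneg d) ((abs_nonneg c).trans hc)
  have := abs_sub_abs_le_abs_sub 1 (c * d)
  rw [abs_one] at this
  linarith

theorem ofReal_mul_lintegral_comp_le_of_le_abs_det {E : Type*} [NormedAddCommGroup E]
    [NormedSpace ℝ E] [FiniteDimensional ℝ E] [MeasurableSpace E] [BorelSpace E] (μ : Measure E)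
    [μ.IsAddHaarMeasure] {f : E → E} {f' : E → E →L[ℝ] E} (hf : ∀ x, HasFDerivAt f (f' x) x)
    (hinj : Function.Injective f) {c : ℝ} (hc : ∀ x, c ≤ |(f' x).det|) (g : E → ℝ≥0∞) :
    ENNReal.ofReal c * ∫⁻ x, g (f x) ∂μ ≤ ∫⁻ x, g x ∂μ := by
  have hcov := lintegral_image_eq_lintegral_abs_det_fderiv_mul μ MeasurableSet.univ
    (fun x _ => (hf x).hasFDerivWithinAt) hinj.injOn g
  rw [Measure.restrict_univ] at hcov
  calc ENNReal.ofReal c * ∫⁻ x, g (f x) ∂μ ≤ ∫⁻ x, ENNReal.ofReal c * g (f x) ∂μ :=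
        lintegral_const_mul_le _ _
    _ ≤ ∫⁻ x, ENNReal.ofReal |(f' x).det| * g (f x) ∂μ := by
        gcongr with x
        exact hc x
    _ = ∫⁻ x in f '' Set.univ, g x ∂μ := hcov.symm
    _ ≤ ∫⁻ x, g x ∂μ := setLIntegral_le_lintegral _ _

/-- **Change-of-variables estimate (proof of Lemma 3.2).** If `a, b : ℝ → ℝ` are `C¹`
with `(sup |a'|)·(sup |b'|) ≤ 1/2` and `Φ(x,y) = (x + a(y), y + b(x))`, then `Φ` is
injective, `|det DΦ(x,y)| = |1 − a'(y)b'(x)| ≥ 1/2` everywhere, `∫ ψ∘Φ ≤ 2 ∫ ψ` for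
every measurable `ψ : ℝ² → [0,∞]`, and `∫ |ψ∘Φ|² ≤ 2‖ψ‖²_{L²}` for every `ψ ∈ L²(ℝ²)`. -/
theorem change_of_variables_estimate (a b : ℝ → ℝ)
    (ha : ContDiff ℝ 1 a) (hb : ContDiff ℝ 1 b)
    (Ka Kb : ℝ) (hKa : ∀ y, |deriv a y| ≤ Ka) (hKb : ∀ x, |deriv b x| ≤ Kb)
    (hK : Ka * Kb ≤ 1 / 2)
    (Φ : ℝ × ℝ → ℝ × ℝ) (hΦ : ∀ p, Φ p = (p.1 + a p.2, p.2 + b p.1)) :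
    Function.Injective Φ ∧
    (∀ p : ℝ × ℝ,
      |LinearMap.det ((fderiv ℝ Φ p : (ℝ × ℝ) →L[ℝ] (ℝ × ℝ)) : (ℝ × ℝ) →ₗ[ℝ] (ℝ × ℝ))|
          = |1 - deriv a p.2 * deriv b p.1| ∧
        (1:ℝ) / 2 ≤ |1 - deriv a p.2 * deriv b p.1|) ∧
    (∀ ψ : ℝ × ℝ → ℝ≥0∞, Measurable ψ →
      ∫⁻ p, ψ (Φ p) ∂(volume : Measure (ℝ × ℝ)) ≤ 2 * ∫⁻ p, ψ p ∂(volume : Measure (ℝ × ℝ))) ∧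
    (∀ ψ : ℝ × ℝ → ℝ, MemLp ψ 2 (volume : Measure (ℝ × ℝ)) →
      ∫⁻ p, (‖ψ (Φ p)‖₊ : ℝ≥0∞) ^ 2 ∂(volume : Measure (ℝ × ℝ)) ≤
        2 * eLpNorm ψ 2 (volume : Measure (ℝ × ℝ)) ^ 2) := by
  obtain rfl : Φ = doubleShear a b := funext hΦ
  have hda : Differentiable ℝ a := ha.differentiable one_ne_zero
  have hdb : Differentiable ℝ b := hb.differentiable one_ne_zero
  have hinj : Function.Injective (doubleShear a b) := by
    refine doubleShear_injective (lipschitzWith_of_abs_deriv_le hda hKa)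
      (lipschitzWith_of_abs_deriv_le hdb hKb) ?_
    rw [← Real.toNNReal_mul ((abs_nonneg _).trans (hKa 0)), Real.toNNReal_lt_one]
    linarith
  have hderiv (p : ℝ × ℝ) := hasFDerivAt_doubleShear (hda p.2).hasFDerivAt (hdb p.1).hasFDerivAt
  have hdet (p : ℝ × ℝ) : LinearMap.det (fderiv ℝ (doubleShear a b) p : (ℝ × ℝ) →ₗ[ℝ] (ℝ × ℝ))
      = 1 - deriv a p.2 * deriv b p.1 := by
    rw [(hderiv p).fderiv]
    exact LinearMap.det_fst_add_comp_snd_prod _ _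
  have hdet_ge (p : ℝ × ℝ) : (1 : ℝ) / 2 ≤ |1 - deriv a p.2 * deriv b p.1| := by
    linarith [one_sub_mul_le_abs_one_sub_mul (hKa p.2) (hKb p.1)]
  have hlint (g : ℝ × ℝ → ℝ≥0∞) : ∫⁻ p, g (doubleShear a b p) ≤ 2 * ∫⁻ p, g p := by
    have := ofReal_mul_lintegral_comp_le_of_le_abs_det volume
      (fun p => (hderiv p).differentiableAt.hasFDerivAt) hinj (c := 1 / 2)
      (fun p => (hdet p ▸ hdet_ge p :)) g
    rwa [ENNReal.ofReal_div_of_pos two_pos, ENNReal.ofReal_one, ENNReal.ofReal_ofNat, one_div,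
      ENNReal.inv_mul_le_iff two_ne_zero ENNReal.ofNat_ne_top] at this
  refine ⟨hinj, fun p => ⟨by rw [hdet p], hdet_ge p⟩, fun g _ => hlint g, fun ψ _ => ?_⟩
  have hL2 : eLpNorm ψ 2 volume ^ 2 = ∫⁻ p, ‖ψ p‖ₑ ^ 2 := by
    simpa using eLpNorm_nnreal_pow_eq_lintegral (f := ψ) (μ := volume) (p := 2) two_ne_zero
  rw [hL2]
  exact hlint _

end
end

section
/- Let β ∈ (0,1] and define g : (0,1] → ℝ by g(x) = x^{β/(β+2)} (1 + x^β)^{1+1/β}. Suppose R(0) ∈ (0,1] satisfies g(R(0)) ≤ 1/2 and (1 + 1/β) R(0)^β / (1 − 2^{−β}) ≤ log 2, and define recursively R(k+1) = R(k)^{2(β+1)/(β+2)} (1 + R(k)^β)^{1+1/β}. Then: (i) R(k+1)/R(k) = g(R(k)) for all k ≥ 0; (ii) the sequence (R(k)) is strictly decreasing and R(k) ≤ 2^{−k} R(0) for all k ≥ 0; and (iii) the infinite product satisfies ∏_{k=0}^{∞} (1 + R(k)^β)^{1+1/β} ≤ 2. (Convergence claims for the scale sequence in the proof of Proposition 3.1.)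 -/
noncomputable section

/-- **Convergence claims for the scale sequence in the proof of Proposition 3.1.**
Let `β ∈ (0,1]`, `g(x) = x^{β/(β+2)} (1+x^β)^{1+1/β}`, and suppose `R 0 ∈ (0,1]` with
`g(R 0) ≤ 1/2` and `(1+1/β) (R 0)^β / (1 − 2^{−β}) ≤ log 2`, and
`R (k+1) = (R k)^{2(β+1)/(β+2)} (1 + (R k)^β)^{1+1/β}`. Then:
(i) `R(k+1)/R(k) = g(R(k))`; (ii) `R` is strictly decreasing with `R k ≤ 2^{−k} R 0`;
(iii) `∏_{k=0}^∞ (1 + (R k)^β)^{1+1/β} ≤ 2`. -/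
theorem scale_sequence_convergence (β : ℝ) (hβ : 0 < β) (hβ1 : β ≤ 1)
    (g : ℝ → ℝ) (hg : ∀ x, g x = x ^ (β / (β + 2)) * (1 + x ^ β) ^ (1 + 1 / β))
    (R : ℕ → ℝ) (hR0 : 0 < R 0) (hR01 : R 0 ≤ 1)
    (hg0 : g (R 0) ≤ 1 / 2)
    (hlog : (1 + 1 / β) * R 0 ^ β / (1 - (2:ℝ) ^ (-β)) ≤ Real.log 2)
    (hrec : ∀ k, R (k + 1) =
      R k ^ (2 * (β + 1) / (β + 2)) * (1 + R k ^ β) ^ (1 + 1 / β)) :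
    (∀ k, R (k + 1) / R k = g (R k)) ∧
    (StrictAnti R ∧ ∀ k : ℕ, R k ≤ (2:ℝ) ^ (-(k : ℤ)) * R 0) ∧
    ∏' k : ℕ, (1 + R k ^ β) ^ (1 + 1 / β) ≤ 2 := by
  have hβ2 : (0:ℝ) < β + 2 := by linarith
  have he1 : (0:ℝ) ≤ β / (β + 2) := by positivity
  have he2 : (0:ℝ) ≤ 1 + 1 / β := by positivity
  have hgmono : ∀ x, 0 < x → x ≤ R 0 → g x ≤ 1 / 2 := by
    intro x hx hxR
    have h1 : x ^ (β / (β + 2)) ≤ R 0 ^ (β / (β + 2)) :=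
      Real.rpow_le_rpow hx.le hxR he1
    have h2 : (1 + x ^ β) ^ (1 + 1/β) ≤ (1 + R 0 ^ β) ^ (1 + 1/β) := by
      apply Real.rpow_le_rpow (by positivity) _ he2
      have := Real.rpow_le_rpow hx.le hxR hβ.le
      linarith
    calc g x = x ^ (β / (β + 2)) * (1 + x ^ β) ^ (1 + 1/β) := hg x
      _ ≤ R 0 ^ (β / (β + 2)) * (1 + R 0 ^ β) ^ (1 + 1/β) :=
          mul_le_mul h1 h2 (by positivity) (by positivity)
      _ = g (R 0) := (hg _).symm
      _ ≤ 1 / 2 := hg0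
  have hgpos : ∀ x : ℝ, 0 < x → 0 < g x := by
    intro x hx; rw [hg]; positivity
  -- part (i) given positivity
  have hi' : ∀ k, 0 < R k → R (k + 1) / R k = g (R k) := by
    intro k hk
    have hdiv : R k ^ (2 * (β + 1) / (β + 2)) / R k = R k ^ (β / (β + 2)) := by
      calc R k ^ (2 * (β + 1) / (β + 2)) / R k
          = R k ^ (2 * (β + 1) / (β + 2)) / R k ^ (1:ℝ) := by rw [Real.rpow_one]
        _ = R k ^ (2 * (β + 1) / (β + 2) - 1) := (Real.rpow_sub hk _ _).symm
        _ = R k ^ (β / (β + 2)) := by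
            congr 1; field_simp; ring
    rw [hrec k, hg, mul_div_right_comm, hdiv]
  have hpow : ∀ k : ℕ, (2:ℝ) ^ (-(k : ℤ)) = (1/2:ℝ) ^ k := by
    intro k; rw [zpow_neg, zpow_natCast, ← inv_pow, one_div]
  -- key induction
  have hkey : ∀ k, 0 < R k ∧ R k ≤ (2:ℝ) ^ (-(k : ℤ)) * R 0 := by
    intro k
    induction k with
    | zero => exact ⟨hR0, by norm_num⟩
    | succ n ih =>
      obtain ⟨hpos, hbd⟩ := ih
      have hle1 : R n ≤ R 0 := by
        have h1 : (2:ℝ) ^ (-(n : ℤ)) ≤ 1 := by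
          rw [hpow]; exact pow_le_one₀ (by norm_num) (by norm_num)
        nlinarith
      have hgh := hgmono (R n) hpos hle1
      have heq : R (n + 1) = g (R n) * R n := by
        have := (div_eq_iff hpos.ne').mp (hi' n hpos)
        linarith [this]
      constructor
      · rw [heq]; exact mul_pos (hgpos _ hpos) hpos
      · rw [heq]
        have : g (R n) * R n ≤ (1/2) * ((2:ℝ) ^ (-(n : ℤ)) * R 0) := by
          have := hgpos (R n) hpos
          nlinarith
        calc g (R n) * R n ≤ (1/2) * ((2:ℝ) ^ (-(n : ℤ)) * R 0) := this
          _ = (2:ℝ) ^ (-((n:ℤ) + 1)) * R 0 := by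
              rw [hpow, show (-((n:ℤ)+1)) = -(((n+1:ℕ)):ℤ) by push_cast; ring, hpow]
              ring
          _ = (2:ℝ) ^ (-(((n+1:ℕ)) : ℤ)) * R 0 := by push_cast; ring_nf
  have hposR : ∀ k, 0 < R k := fun k => (hkey k).1
  have hi : ∀ k, R (k + 1) / R k = g (R k) := fun k => hi' k (hposR k)
  have hhalf : ∀ k, R (k + 1) ≤ (1/2) * R k := by
    intro k
    have heq : R (k + 1) = g (R k) * R k := by
      have := (div_eq_iff (hposR k).ne').mp (hi k)
      linarith [this]
    have hle1 : R k ≤ R 0 := by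
      have := (hkey k).2
      have h1 : (2:ℝ) ^ (-(k : ℤ)) ≤ 1 := by
        rw [hpow]; exact pow_le_one₀ (by norm_num) (by norm_num)
      nlinarith [hR0]
    have := hgmono (R k) (hposR k) hle1
    nlinarith [hposR k]
  have hanti : StrictAnti R := by
    apply strictAnti_nat_of_succ_lt
    intro n
    have := hhalf n
    have := hposR n
    linarith
  refine ⟨hi, ⟨hanti, fun k => (hkey k).2⟩, ?_⟩
  -- part (iii)
  set a : ℕ → ℝ := fun k => (1 + 1/β) * Real.log (1 + R k ^ β) with ha_def
  have h1p : ∀ k, (0:ℝ) < 1 + R k ^ β := by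
    intro k; have : (0:ℝ) < R k ^ β := Real.rpow_pos_of_pos (hposR k) β; linarith
  have hfa : ∀ k, (1 + R k ^ β) ^ (1 + 1/β) = Real.exp (a k) := by
    intro k
    rw [Real.rpow_def_of_pos (h1p k), ha_def]; ring_nf
  set r : ℝ := (1/2:ℝ) ^ β with hr_def
  have hr0 : (0:ℝ) ≤ r := Real.rpow_nonneg (by norm_num) β
  have hr1 : r < 1 := Real.rpow_lt_one (by norm_num) (by norm_num) hβ
  have hr2 : (2:ℝ) ^ (-β) = r := by
    rw [Real.rpow_neg (by norm_num), hr_def, one_div, Real.inv_rpow (by norm_num)]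
  have hbound : ∀ k, a k ≤ ((1 + 1/β) * R 0 ^ β) * r ^ k := by
    intro k
    have hlog1 : Real.log (1 + R k ^ β) ≤ R k ^ β := by
      have := Real.log_le_sub_one_of_pos (h1p k)
      linarith
    have hRk : R k ^ β ≤ r ^ k * R 0 ^ β := by
      have h1 : R k ^ β ≤ ((2:ℝ) ^ (-(k : ℤ)) * R 0) ^ β :=
        Real.rpow_le_rpow (hposR k).le (hkey k).2 hβ.le
      have h2 : ((2:ℝ) ^ (-(k : ℤ)) * R 0) ^ β = ((1/2:ℝ)^k) ^ β * R 0 ^ β := by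
        rw [hpow, Real.mul_rpow (by positivity) hR0.le]
      have h3 : ((1/2:ℝ)^k : ℝ) ^ β = r ^ k := by
        rw [← Real.rpow_natCast (1/2:ℝ) k, ← Real.rpow_mul (by norm_num),
          mul_comm, Real.rpow_mul (by norm_num), Real.rpow_natCast]
      rw [h2, h3] at h1
      exact h1
    have hbpos : (0:ℝ) < 1 + 1/β := by positivity
    calc a k = (1 + 1/β) * Real.log (1 + R k ^ β) := rfl
      _ ≤ (1 + 1/β) * (r ^ k * R 0 ^ β) := by
          apply mul_le_mul_of_nonneg_left (le_trans hlog1 hRk) hbpos.le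
      _ = ((1 + 1/β) * R 0 ^ β) * r ^ k := by ring
  have ha_nonneg : ∀ k, 0 ≤ a k := by
    intro k
    have : (0:ℝ) ≤ Real.log (1 + R k ^ β) := by
      apply Real.log_nonneg
      have : (0:ℝ) < R k ^ β := Real.rpow_pos_of_pos (hposR k) β
      linarith
    positivity
  have hsumb : Summable (fun k : ℕ => ((1 + 1/β) * R 0 ^ β) * r ^ k) :=
    (summable_geometric_of_lt_one hr0 hr1).mul_left _
  have hsuma : Summable a := Summable.of_nonneg_of_le ha_nonneg hbound hsumb
  have htsum : ∑' k, a k ≤ Real.log 2 := by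
    calc ∑' k, a k ≤ ∑' k, ((1 + 1/β) * R 0 ^ β) * r ^ k :=
          Summable.tsum_le_tsum hbound hsuma hsumb
      _ = ((1 + 1/β) * R 0 ^ β) * (1 - r)⁻¹ := by
          rw [tsum_mul_left, tsum_geometric_of_lt_one hr0 hr1]
      _ = (1 + 1/β) * R 0 ^ β / (1 - (2:ℝ) ^ (-β)) := by
          rw [hr2]; ring
      _ ≤ Real.log 2 := hlog
  have hprod : HasProd (fun k => (1 + R k ^ β) ^ (1 + 1/β)) (Real.exp (∑' k, a k)) := by
    have := hsuma.hasSum.rexp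
    convert this using 1
    funext k
    exact hfa k
  rw [hprod.tprod_eq]
  calc Real.exp (∑' k, a k) ≤ Real.exp (Real.log 2) := Real.exp_le_exp.mpr htsum
    _ = 2 := Real.exp_log (by norm_num)
end
end
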